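/- The Jacobian determinant of the Lagrangian leapfrog half-step velocity update is a ratio of matrix determinants: fix ε ∈ ℝ and consider the map Θ(q, v) = (q, v̆) where v̆ = (Id + Ω(ε,q,v))^{-1}(v − (ε/2) G(q)^{-1} ∇U(q)). At any point (q, v) where Id + Ω(ε,q,v) is invertible, the absolute value of the Jacobian determinant of Θ satisfies |det(∂(q,v̆)/∂(q,v))| = |det(Id − Ω(ε,q,v̆))| / |det(Id + Ω(ε,q,v))|. -/

import Mathlib

open Matrix

/-- The Christoffel symbols `Γ^k_{ij}(q)` of the metric `G`. -/
noncomputable def christoffel (m : ℕ) (G : (Fin m → ℝ) → Matrix (Fin m) (Fin m) ℝ)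
    (k i j : Fin m) (q : Fin m → ℝ) : ℝ :=
  (1 / 2) * ∑ l, (G q)⁻¹ k l *
    (fderiv ℝ (fun x => G x l j) q (Pi.single i 1)
      + fderiv ℝ (fun x => G x l i) q (Pi.single j 1)
      - fderiv ℝ (fun x => G x i j) q (Pi.single l 1))

/-- The matrix `Ω(ε, q, v)` with entries `Ω_{ij} = (ε/2) Σ_k Γ^i_{kj}(q) v^{(k)}`. -/
noncomputable def Omega (m : ℕ) (G : (Fin m → ℝ) → Matrix (Fin m) (Fin m) ℝ)
    (ε : ℝ) (q v : Fin m → ℝ) : Matrix (Fin m) (Fin m) ℝ :=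
  Matrix.of fun i j => (ε / 2) * ∑ k, christoffel m G i k j q * v k


/-- The coordinate gradient `∇U(q)`, with `(∇U(q))_l = ∂U/∂q^{(l)}(q)`. -/
noncomputable def gradU (m : ℕ) (U : (Fin m → ℝ) → ℝ) (q : Fin m → ℝ) : Fin m → ℝ :=
  fun l => fderiv ℝ U q (Pi.single l 1)

/-- One step of the Lagrangian leapfrog integrator with step-size `ε`. -/
noncomputable def lagrangianLeapfrog (m : ℕ)
    (G : (Fin m → ℝ) → Matrix (Fin m) (Fin m) ℝ) (U : (Fin m → ℝ) → ℝ)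
    (ε : ℝ) (x : (Fin m → ℝ) × (Fin m → ℝ)) : (Fin m → ℝ) × (Fin m → ℝ) :=
  let q := x.1
  let v := x.2
  let vb := ((1 : Matrix (Fin m) (Fin m) ℝ) + Omega m G ε q v)⁻¹ *ᵥ
    (v - (ε / 2) • ((G q)⁻¹ *ᵥ gradU m U q))
  let qt := q + ε • vb
  let vt := ((1 : Matrix (Fin m) (Fin m) ℝ) + Omega m G ε qt vb)⁻¹ *ᵥ
    (vb - (ε / 2) • ((G qt)⁻¹ *ᵥ gradU m U qt))
  (qt, vt)

/-- The half-step velocity update `Θ(q,v) = (q, v̆)` of the Lagrangian leapfrog. -/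
noncomputable def halfVelocityUpdate (m : ℕ)
    (G : (Fin m → ℝ) → Matrix (Fin m) (Fin m) ℝ) (U : (Fin m → ℝ) → ℝ)
    (ε : ℝ) (x : (Fin m → ℝ) × (Fin m → ℝ)) : (Fin m → ℝ) × (Fin m → ℝ) :=
  (x.1, ((1 : Matrix (Fin m) (Fin m) ℝ) + Omega m G ε x.1 x.2)⁻¹ *ᵥ
    (x.2 - (ε / 2) • ((G x.1)⁻¹ *ᵥ gradU m U x.1)))

variable {E : Type*} [NormedAddCommGroup E] [NormedSpace ℝ E]

/-- det of a matrix-valued function is smooth at a point if all entries are. -/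
theorem contDiffAt_det' {m : ℕ} {f : E → Matrix (Fin m) (Fin m) ℝ} {x : E}
    (h : ∀ i j, ContDiffAt ℝ (⊤ : ℕ∞) (fun e => f e i j) x) :
    ContDiffAt ℝ (⊤ : ℕ∞) (fun e => (f e).det) x := by
  simp only [Matrix.det_apply, Units.smul_def, zsmul_eq_mul]
  exact ContDiffAt.sum fun σ _ => (contDiffAt_const.mul (contDiffAt_prod (fun i _ => h (σ i) i)))

/-- entries of the inverse of a matrix-valued function are smooth where det ≠ 0. -/
theorem contDiffAt_inv_entry {m : ℕ} {f : E → Matrix (Fin m) (Fin m) ℝ} {x : E}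
    (h : ∀ i j, ContDiffAt ℝ (⊤ : ℕ∞) (fun e => f e i j) x)
    (hdet : ContDiffAt ℝ (⊤ : ℕ∞) (fun e => (f e).det) x)
    (hne : (f x).det ≠ 0) (i j : Fin m) :
    ContDiffAt ℝ (⊤ : ℕ∞) (fun e => (f e)⁻¹ i j) x := by
  have key : ∀ e, (f e)⁻¹ i j = ((f e).det)⁻¹ * (f e).adjugate i j := by
    intro e
    rw [Matrix.inv_def, Matrix.smul_apply, Ring.inverse_eq_inv', smul_eq_mul]
  simp only [key]
  refine (hdet.inv hne).mul ?_
  simp only [Matrix.adjugate_apply]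
  refine contDiffAt_det' fun a b => ?_
  simp only [Matrix.updateRow_apply]
  by_cases hab : a = j
  · simp only [hab, if_true]; exact contDiffAt_const
  · simp only [hab, if_false]; exact h a b

section Main
variable {m : ℕ} {G : (Fin m → ℝ) → Matrix (Fin m) (Fin m) ℝ}
  (hGsmooth : ∀ i j, ContDiff ℝ (⊤ : ℕ∞) fun q => G q i j) (hGpd : ∀ q, (G q).PosDef)

include hGsmooth hGpd in
theorem christoffel_contDiff (k i j : Fin m) :
    ContDiff ℝ (⊤ : ℕ∞) (fun q => christoffel m G k i j q) := by
  have hdG : ∀ a b c : Fin m,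
      ContDiff ℝ (⊤ : ℕ∞) (fun q => fderiv ℝ (fun x => G x a b) q (Pi.single c 1)) := by
    intro a b c
    exact ((hGsmooth a b).fderiv_right (by simp)).clm_apply contDiff_const
  have hinv : ∀ a b : Fin m, ContDiff ℝ (⊤ : ℕ∞) (fun q => (G q)⁻¹ a b) := by
    intro a b
    rw [contDiff_iff_contDiffAt]
    intro q
    exact contDiffAt_inv_entry (fun i j => (hGsmooth i j).contDiffAt)
      (contDiffAt_det' fun i j => (hGsmooth i j).contDiffAt) (hGpd q).det_pos.ne' a b
  unfold christoffel
  exact contDiff_const.mul (ContDiff.sum fun l _ =>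
    (hinv k l).mul (((hdG l j i).add (hdG l i j)).sub (hdG i j l)))
end Main

section Main2
variable {m : ℕ} {G : (Fin m → ℝ) → Matrix (Fin m) (Fin m) ℝ}
  (hGpd : ∀ q, (G q).PosDef)

include hGpd in
theorem christoffel_symm (k i j : Fin m) (q : Fin m → ℝ) :
    christoffel m G k i j q = christoffel m G k j i q := by
  have hsym : ∀ x : Fin m → ℝ, ∀ a b : Fin m, G x a b = G x b a := by
    intro x a b
    have h := (hGpd x).isHermitian.apply b a
    simpa using h
  unfold christoffel
  congr 1
  refine Finset.sum_congr rfl fun l _ => ?_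
  congr 1
  have h1 : (fun x => G x i j) = fun x => G x j i := funext fun x => hsym x i j
  rw [h1]
  ring
include hGpd in
theorem omega_symm (ε : ℝ) (q w z : Fin m → ℝ) :
    Omega m G ε q w *ᵥ z = Omega m G ε q z *ᵥ w := by
  funext i
  simp only [Omega, Matrix.mulVec, dotProduct, Matrix.of_apply, Finset.sum_mul, Finset.mul_sum]
  rw [Finset.sum_comm]
  refine Finset.sum_congr rfl fun a _ => Finset.sum_congr rfl fun j _ => ?_
  rw [christoffel_symm hGpd i a j]
  ring
end Main2

/-- the absolute Jacobian determinant of the half-step velocity update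
`Θ(q,v) = (q,v̆)` equals `|det(Id − Ω(ε,q,v̆))| / |det(Id + Ω(ε,q,v))|`. -/
theorem halfVelocityUpdate_jacobian
    (m : ℕ) (hm : 1 ≤ m)
    (G : (Fin m → ℝ) → Matrix (Fin m) (Fin m) ℝ)
    (hGsmooth : ∀ i j, ContDiff ℝ (⊤ : ℕ∞) fun q => G q i j)
    (hGpd : ∀ q, (G q).PosDef)
    (U : (Fin m → ℝ) → ℝ) (hU : ContDiff ℝ (⊤ : ℕ∞) U)
    (ε : ℝ) (q v vb : Fin m → ℝ)
    (hvb : vb = (halfVelocityUpdate m G U ε (q, v)).2)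
    (h1 : IsUnit ((1 : Matrix (Fin m) (Fin m) ℝ) + Omega m G ε q v).det) :
    |LinearMap.det ((fderiv ℝ (halfVelocityUpdate m G U ε) (q, v) :
        ((Fin m → ℝ) × (Fin m → ℝ)) →ₗ[ℝ] ((Fin m → ℝ) × (Fin m → ℝ))))|
      = |((1 : Matrix (Fin m) (Fin m) ℝ) - Omega m G ε q vb).det|
        / |((1 : Matrix (Fin m) (Fin m) ℝ) + Omega m G ε q v).det| := by
  classical
  set F : (Fin m → ℝ) × (Fin m → ℝ) → (Fin m → ℝ) := fun x => ((1 : Matrix (Fin m) (Fin m) ℝ) + Omega m G ε x.1 x.2)⁻¹ *ᵥ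
    (x.2 - (ε / 2) • ((G x.1)⁻¹ *ᵥ gradU m U x.1)) with hFdef
  -- smoothness of entries of 1 + Ω
  have hOmega_entry : ∀ i j, ContDiff ℝ (⊤ : ℕ∞)
      (fun x : (Fin m → ℝ) × (Fin m → ℝ) => ((1 : Matrix (Fin m) (Fin m) ℝ) + Omega m G ε x.1 x.2) i j) := by
    intro i j
    have : (fun x : (Fin m → ℝ) × (Fin m → ℝ) => ((1 : Matrix (Fin m) (Fin m) ℝ) + Omega m G ε x.1 x.2) i j)
        = fun x : (Fin m → ℝ) × (Fin m → ℝ) => (1 : Matrix (Fin m) (Fin m) ℝ) i j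
          + (ε / 2) * ∑ k, christoffel m G i k j x.1 * x.2 k := by
      funext x; simp [Omega]
    rw [this]
    refine contDiff_const.add (contDiff_const.mul (ContDiff.sum fun k _ => ?_))
    exact ((christoffel_contDiff hGsmooth hGpd i k j).comp contDiff_fst).mul
      ((ContinuousLinearMap.proj k : (Fin m → ℝ) →L[ℝ] ℝ).contDiff.comp contDiff_snd)
  have hdetA : ContDiffAt ℝ (⊤ : ℕ∞)
      (fun x : (Fin m → ℝ) × (Fin m → ℝ) => ((1 : Matrix (Fin m) (Fin m) ℝ) + Omega m G ε x.1 x.2).det) (q, v) :=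
    contDiffAt_det' fun i j => (hOmega_entry i j).contDiffAt
  have hAne : ((1 : Matrix (Fin m) (Fin m) ℝ) + Omega m G ε q v).det ≠ 0 := h1.ne_zero
  -- smoothness of b
  have hGinv : ∀ a b : Fin m, ContDiff ℝ (⊤ : ℕ∞) (fun y : (Fin m → ℝ) => (G y)⁻¹ a b) := by
    intro a b
    rw [contDiff_iff_contDiffAt]
    intro y
    exact contDiffAt_inv_entry (fun i j => (hGsmooth i j).contDiffAt)
      (contDiffAt_det' fun i j => (hGsmooth i j).contDiffAt) (hGpd y).det_pos.ne' a b
  have hgradU : ∀ l, ContDiff ℝ (⊤ : ℕ∞) (fun y : (Fin m → ℝ) => gradU m U y l) := by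
    intro l
    exact (hU.fderiv_right (by simp)).clm_apply contDiff_const
  have hb : ∀ j, ContDiff ℝ (⊤ : ℕ∞)
      (fun x : (Fin m → ℝ) × (Fin m → ℝ) => (x.2 - (ε / 2) • ((G x.1)⁻¹ *ᵥ gradU m U x.1)) j) := by
    intro j
    have : (fun x : (Fin m → ℝ) × (Fin m → ℝ) => (x.2 - (ε / 2) • ((G x.1)⁻¹ *ᵥ gradU m U x.1)) j)
        = fun x : (Fin m → ℝ) × (Fin m → ℝ) => x.2 j - (ε / 2) * ∑ l, (G x.1)⁻¹ j l * gradU m U x.1 l := by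
      funext x
      simp [Matrix.mulVec, dotProduct]
    rw [this]
    refine (((ContinuousLinearMap.proj j : (Fin m → ℝ) →L[ℝ] ℝ).contDiff.comp contDiff_snd)).sub
      (contDiff_const.mul (ContDiff.sum fun l _ => ?_))
    exact ((hGinv j l).comp contDiff_fst).mul ((hgradU l).comp contDiff_fst)
  -- F is differentiable at p
  have hFcomp : ∀ i, ContDiffAt ℝ (⊤ : ℕ∞) (fun x : (Fin m → ℝ) × (Fin m → ℝ) => F x i) (q, v) := by
    intro i
    have : (fun x : (Fin m → ℝ) × (Fin m → ℝ) => F x i) = fun x : (Fin m → ℝ) × (Fin m → ℝ) =>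
        ∑ j, ((1 : Matrix (Fin m) (Fin m) ℝ) + Omega m G ε x.1 x.2)⁻¹ i j
          * (x.2 - (ε / 2) • ((G x.1)⁻¹ *ᵥ gradU m U x.1)) j := by
      funext x
      simp [hFdef, Matrix.mulVec, dotProduct]
    rw [this]
    refine ContDiffAt.sum fun j _ => ContDiffAt.mul ?_ ((hb j).contDiffAt)
    exact contDiffAt_inv_entry (fun a b => (hOmega_entry a b).contDiffAt) hdetA hAne i j
  have hFdiff : DifferentiableAt ℝ F (q, v) :=
    (contDiffAt_pi.2 hFcomp).differentiableAt (by simp)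
  have hvbF : vb = F (q, v) := by rw [hvb, hFdef]; rfl
  -- derivative of the inclusion w ↦ (q, w)
  have hι : HasFDerivAt (fun w : Fin m → ℝ => ((q, w) : (Fin m → ℝ) × (Fin m → ℝ)))
      (((0 : (Fin m → ℝ) →L[ℝ] (Fin m → ℝ))).prod (ContinuousLinearMap.id ℝ (Fin m → ℝ))) v :=
    (hasFDerivAt_const q v).prodMk (hasFDerivAt_id v)
  have hφ : HasFDerivAt (fun w => F (q, w))
      ((fderiv ℝ F (q, v)).comp
        (((0 : (Fin m → ℝ) →L[ℝ] (Fin m → ℝ))).prod (ContinuousLinearMap.id ℝ (Fin m → ℝ)))) v :=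
    (hFdiff.hasFDerivAt).comp v hι
  set Dφ := (fderiv ℝ F (q, v)).comp
      (((0 : (Fin m → ℝ) →L[ℝ] (Fin m → ℝ))).prod (ContinuousLinearMap.id ℝ (Fin m → ℝ)))
    with hDφdef
  -- the derivative of w ↦ (1 + Ω(q,w)) i j
  set ℓ : Fin m → Fin m → ((Fin m → ℝ) →L[ℝ] ℝ) := fun i j =>
    (ε / 2) • ∑ k, christoffel m G i k j q • (ContinuousLinearMap.proj k :
      ((Fin m → ℝ)) →L[ℝ] ℝ) with hℓdef
  have hℓ_apply : ∀ i j (k : Fin m → ℝ), ℓ i j k = Omega m G ε q k i j := by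
    intro i j w
    simp [hℓdef, Omega, ContinuousLinearMap.sum_apply, Finset.mul_sum]
  have hMder : ∀ i j, HasFDerivAt
      (fun w => ((1 : Matrix (Fin m) (Fin m) ℝ) + Omega m G ε q w) i j) (ℓ i j) v := by
    intro i j
    have heq : (fun w => ((1 : Matrix (Fin m) (Fin m) ℝ) + Omega m G ε q w) i j)
        = fun w => (1 : Matrix (Fin m) (Fin m) ℝ) i j + ℓ i j w := by
      funext w
      simp [hℓ_apply, Omega]
    rw [heq]
    simpa using ((ℓ i j).hasFDerivAt).const_add ((1 : Matrix (Fin m) (Fin m) ℝ) i j)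
  have hφj : ∀ j, HasFDerivAt (fun w => F (q, w) j)
      ((ContinuousLinearMap.proj j : ((Fin m → ℝ)) →L[ℝ] ℝ).comp Dφ) v := fun j =>
    (ContinuousLinearMap.proj j : ((Fin m → ℝ)) →L[ℝ] ℝ).hasFDerivAt.comp v hφ
  have hg : ∀ i, HasFDerivAt
      (fun w => ∑ j, ((1 : Matrix (Fin m) (Fin m) ℝ) + Omega m G ε q w) i j * F (q, w) j)
      (∑ j, (((1 : Matrix (Fin m) (Fin m) ℝ) + Omega m G ε q v) i j •
          ((ContinuousLinearMap.proj j : ((Fin m → ℝ)) →L[ℝ] ℝ).comp Dφ)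
        + F (q, v) j • ℓ i j)) v :=
    fun i => HasFDerivAt.fun_sum fun j _ => (hMder i j).mul (hφj j)
  -- the product is eventually equal to w - c
  have hentry_w : ∀ i j, ContDiff ℝ (⊤ : ℕ∞)
      (fun w : Fin m → ℝ => ((1 : Matrix (Fin m) (Fin m) ℝ) + Omega m G ε q w) i j) := by
    intro i j
    have heq : (fun w : Fin m → ℝ => ((1 : Matrix (Fin m) (Fin m) ℝ) + Omega m G ε q w) i j)
        = fun w => (1 : Matrix (Fin m) (Fin m) ℝ) i j
          + (ε / 2) * ∑ k, christoffel m G i k j q * w k := by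
      funext w; simp [Omega]
    rw [heq]
    exact contDiff_const.add (contDiff_const.mul (ContDiff.sum fun k _ =>
      contDiff_const.mul ((ContinuousLinearMap.proj k : ((Fin m → ℝ)) →L[ℝ] ℝ).contDiff)))
  have hopen : ∀ᶠ w in nhds v, ((1 : Matrix (Fin m) (Fin m) ℝ) + Omega m G ε q w).det ≠ 0 := by
    have hcont : ContinuousAt
        (fun w : Fin m → ℝ => ((1 : Matrix (Fin m) (Fin m) ℝ) + Omega m G ε q w).det) v :=
      (contDiffAt_det' fun i j => (hentry_w i j).contDiffAt).continuousAt
    exact hcont.eventually_ne hAne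
  have hEq : ∀ i, (fun w => ∑ j,
        ((1 : Matrix (Fin m) (Fin m) ℝ) + Omega m G ε q w) i j * F (q, w) j)
      =ᶠ[nhds v] (fun w => w i - ((ε / 2) • ((G q)⁻¹ *ᵥ gradU m U q)) i) := by
    intro i
    filter_upwards [hopen] with w hw
    have hA : ((1 : Matrix (Fin m) (Fin m) ℝ) + Omega m G ε q w)
        * ((1 : Matrix (Fin m) (Fin m) ℝ) + Omega m G ε q w)⁻¹ = 1 :=
      Matrix.mul_nonsing_inv _ (isUnit_iff_ne_zero.2 hw)
    have h4 : ∑ j, ((1 : Matrix (Fin m) (Fin m) ℝ) + Omega m G ε q w) i j * F (q, w) j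
        = (((1 : Matrix (Fin m) (Fin m) ℝ) + Omega m G ε q w) *ᵥ (F (q, w))) i := by
      simp [Matrix.mulVec, dotProduct]
    rw [h4, hFdef]
    show (((1 : Matrix (Fin m) (Fin m) ℝ) + Omega m G ε q w) *ᵥ
      (((1 : Matrix (Fin m) (Fin m) ℝ) + Omega m G ε q w)⁻¹ *ᵥ
        (w - (ε / 2) • ((G q)⁻¹ *ᵥ gradU m U q)))) i = _
    rw [Matrix.mulVec_mulVec, hA, Matrix.one_mulVec]
    simp
  have hder_eq : ∀ i, (∑ j, (((1 : Matrix (Fin m) (Fin m) ℝ) + Omega m G ε q v) i j •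
          ((ContinuousLinearMap.proj j : ((Fin m → ℝ)) →L[ℝ] ℝ).comp Dφ)
        + F (q, v) j • ℓ i j))
      = (ContinuousLinearMap.proj i : ((Fin m → ℝ)) →L[ℝ] ℝ) := by
    intro i
    have h2 : HasFDerivAt (fun w : Fin m → ℝ => w i - ((ε / 2) • ((G q)⁻¹ *ᵥ gradU m U q)) i)
        (ContinuousLinearMap.proj i : ((Fin m → ℝ)) →L[ℝ] ℝ) v :=
      ((ContinuousLinearMap.proj i : ((Fin m → ℝ)) →L[ℝ] ℝ).hasFDerivAt).sub_const _
    exact (hg i).unique (h2.congr_of_eventuallyEq (hEq i))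
  -- the key identity for the partial derivative in v
  have key : ∀ k : Fin m → ℝ, ((1 : Matrix (Fin m) (Fin m) ℝ) + Omega m G ε q v) *ᵥ (Dφ k)
      = ((1 : Matrix (Fin m) (Fin m) ℝ) - Omega m G ε q vb) *ᵥ k := by
    intro k
    funext i
    have h3 := congrArg (fun (L : ((Fin m → ℝ)) →L[ℝ] ℝ) => L k) (hder_eq i)
    simp only [ContinuousLinearMap.coe_sum', Finset.sum_apply,
      ContinuousLinearMap.add_apply, ContinuousLinearMap.coe_smul', Pi.smul_apply,
      ContinuousLinearMap.comp_apply, ContinuousLinearMap.proj_apply, smul_eq_mul,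
      hℓ_apply] at h3
    have h5 : ∑ j, F (q, v) j * Omega m G ε q k i j = (Omega m G ε q vb *ᵥ k) i := by
      rw [← omega_symm hGpd ε q k vb]
      simp [Matrix.mulVec, dotProduct, hvbF, mul_comm]
    rw [Finset.sum_add_distrib, h5] at h3
    have h6 : (((1 : Matrix (Fin m) (Fin m) ℝ) + Omega m G ε q v) *ᵥ (Dφ k)) i
        = ∑ j, ((1 : Matrix (Fin m) (Fin m) ℝ) + Omega m G ε q v) i j * Dφ k j := by
      simp [Matrix.mulVec, dotProduct]
    rw [h6, Matrix.sub_mulVec, Matrix.one_mulVec]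
    have := h3
    simp only [Pi.sub_apply]
    linarith [h3]
  have hDφ_eq : ∀ k : Fin m → ℝ, Dφ k =
      (((1 : Matrix (Fin m) (Fin m) ℝ) + Omega m G ε q v)⁻¹
        * ((1 : Matrix (Fin m) (Fin m) ℝ) - Omega m G ε q vb)) *ᵥ k := by
    intro k
    have h7 := congrArg
      (fun u => ((1 : Matrix (Fin m) (Fin m) ℝ) + Omega m G ε q v)⁻¹ *ᵥ u) (key k)
    simpa [Matrix.mulVec_mulVec, Matrix.nonsing_inv_mul _ h1, Matrix.one_mulVec] using h7
  have hΘ : HasFDerivAt (halfVelocityUpdate m G U ε)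
      ((ContinuousLinearMap.fst ℝ (Fin m → ℝ) (Fin m → ℝ)).prod (fderiv ℝ F (q, v))) (q, v) := by
    exact hasFDerivAt_fst.prodMk hFdiff.hasFDerivAt
  rw [hΘ.fderiv]
  rw [← LinearMap.det_toMatrix ((Pi.basisFun ℝ (Fin m)).prod (Pi.basisFun ℝ (Fin m)))]
  have hmat : LinearMap.toMatrix ((Pi.basisFun ℝ (Fin m)).prod (Pi.basisFun ℝ (Fin m)))
        ((Pi.basisFun ℝ (Fin m)).prod (Pi.basisFun ℝ (Fin m)))
        (((ContinuousLinearMap.fst ℝ (Fin m → ℝ) (Fin m → ℝ)).prod (fderiv ℝ F (q, v)) :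
          ((Fin m → ℝ) × (Fin m → ℝ)) →L[ℝ] ((Fin m → ℝ) × (Fin m → ℝ))) :
          ((Fin m → ℝ) × (Fin m → ℝ)) →ₗ[ℝ] ((Fin m → ℝ) × (Fin m → ℝ)))
      = Matrix.fromBlocks 1 0
          (Matrix.of fun i j => fderiv ℝ F (q, v) (Pi.single j 1, 0) i)
          (((1 : Matrix (Fin m) (Fin m) ℝ) + Omega m G ε q v)⁻¹
            * ((1 : Matrix (Fin m) (Fin m) ℝ) - Omega m G ε q vb)) := by
    ext i j
    cases i with
    | inl i =>
      cases j with
      | inl j =>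
        simp [LinearMap.toMatrix_apply, Module.Basis.prod_repr_inl, Module.Basis.prod_apply_inl_fst,
          Pi.basisFun_repr, Module.Basis.prod_apply, Pi.basisFun_apply, Matrix.one_apply,
          Pi.single_apply, eq_comm]
      | inr j =>
        simp [LinearMap.toMatrix_apply, Module.Basis.prod_repr_inl, Pi.basisFun_repr,
          Module.Basis.prod_apply, Pi.basisFun_apply]
    | inr i =>
      cases j with
      | inl j =>
        simp [LinearMap.toMatrix_apply, Module.Basis.prod_repr_inr, Pi.basisFun_repr,
          Module.Basis.prod_apply, Pi.basisFun_apply]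
      | inr j =>
        have h8 : fderiv ℝ F (q, v) (0, Pi.single j 1) = Dφ (Pi.single j 1) := by
          rw [hDφdef]; simp
        simp only [LinearMap.toMatrix_apply, Module.Basis.prod_repr_inr, Pi.basisFun_repr,
          Module.Basis.prod_apply, Function.comp, Sum.elim_inr, LinearMap.inr_apply,
          Pi.basisFun_apply, Matrix.fromBlocks_apply₂₂,
          ContinuousLinearMap.coe_coe, ContinuousLinearMap.prod_apply]
        rw [h8, hDφ_eq]
        simp [Matrix.mulVec_single]
  rw [hmat, Matrix.det_fromBlocks_zero₁₂, Matrix.det_one, one_mul, Matrix.det_mul,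
    Matrix.det_nonsing_inv, Ring.inverse_eq_inv']
  rw [abs_mul, abs_inv]
  rw [div_eq_mul_inv, mul_comm]
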